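/- arXiv:2505.24749 — 3 statements merged into one kernel-verified Lean document; each statement's English description precedes it below -/
import Mathlib

section
/- Let g ∈ ℝ^{n×m} be a rank-one matrix and b ∈ ℝ^{n×m} satisfy ⟨g, b⟩_F = 0. Then for every a ≥ 0, the largest singular value of a·g + b satisfies σ₁(a·g + b) ≥ a·‖g‖_F. -/
open Matrix Finset

/-- Frobenius inner product `⟨A,B⟩_F = tr(AᵀB)`. -/
noncomputable def frobInner {n m : ℕ} (A B : Matrix (Fin n) (Fin m) ℝ) : ℝ :=
  (Aᵀ * B).trace

/-- Frobenius norm. -/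
noncomputable def frobNorm {n m : ℕ} (A : Matrix (Fin n) (Fin m) ℝ) : ℝ :=
  Real.sqrt (frobInner A A)

/-- Spectral norm (largest singular value): the supremum of `‖Ax‖₂` over unit vectors `x`. -/
noncomputable def specNorm {n m : ℕ} (A : Matrix (Fin n) (Fin m) ℝ) : ℝ :=
  sSup {r : ℝ | ∃ x : Fin m → ℝ, ∑ j, x j ^ 2 = 1 ∧
    r = Real.sqrt (∑ i, (A.mulVec x) i ^ 2)}

/-! For `g = u vᵀ` one has `⟨g, A⟩_F = uᵀ A v`, and Cauchy–Schwarz at the unit vector `v / ‖v‖`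
bounds this by `‖u‖ ‖v‖ σ₁(A) = ‖g‖_F σ₁(A)`. For `A = a g + b` orthogonality turns the left side
into `a ‖g‖_F²`, and dividing by `‖g‖_F` gives the claim. -/

lemma frobInner_vecMulVec {n m : ℕ} (u : Fin n → ℝ) (v : Fin m → ℝ)
    (A : Matrix (Fin n) (Fin m) ℝ) : frobInner (vecMulVec u v) A = u ⬝ᵥ (A *ᵥ v) := by
  simp only [frobInner, trace, Matrix.diag, mul_apply, transpose_apply, vecMulVec_apply,
    dotProduct, mulVec, Finset.mul_sum]
  rw [Finset.sum_comm]
  exact Finset.sum_congr rfl fun i _ => Finset.sum_congr rfl fun j _ => by ring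

lemma frobInner_add_smul_right {n m : ℕ} (g b : Matrix (Fin n) (Fin m) ℝ) (a : ℝ) :
    frobInner g (a • g + b) = a * frobInner g g + frobInner g b := by
  simp only [frobInner, Matrix.mul_add, Matrix.mul_smul, trace_add, trace_smul, smul_eq_mul]

lemma frobInner_self_nonneg {n m : ℕ} (A : Matrix (Fin n) (Fin m) ℝ) : 0 ≤ frobInner A A := by
  simp only [frobInner, trace, Matrix.diag, mul_apply, transpose_apply]
  exact Finset.sum_nonneg fun j _ => Finset.sum_nonneg fun i _ => mul_self_nonneg (A i j)

lemma frobNorm_nonneg {n m : ℕ} (A : Matrix (Fin n) (Fin m) ℝ) : 0 ≤ frobNorm A :=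
  Real.sqrt_nonneg _

lemma frobNorm_sq {n m : ℕ} (A : Matrix (Fin n) (Fin m) ℝ) : frobNorm A ^ 2 = frobInner A A :=
  Real.sq_sqrt (frobInner_self_nonneg A)

lemma frobNorm_vecMulVec {n m : ℕ} (u : Fin n → ℝ) (v : Fin m → ℝ) :
    frobNorm (vecMulVec u v) = √(∑ i, u i ^ 2) * √(∑ j, v j ^ 2) := by
  have h : frobInner (vecMulVec u v) (vecMulVec u v) = (∑ i, u i ^ 2) * ∑ j, v j ^ 2 := by
    rw [frobInner_vecMulVec, vecMulVec_mulVec, op_smul_eq_smul, dotProduct_smul, smul_eq_mul,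
      mul_comm]
    simp only [dotProduct, sq]
  rw [frobNorm, h, Real.sqrt_mul (Finset.sum_nonneg fun i _ => sq_nonneg (u i))]

lemma sum_sq_pos_of_ne_zero {ι : Type*} [Fintype ι] {v : ι → ℝ} (hv : v ≠ 0) :
    0 < ∑ j, v j ^ 2 := by
  obtain ⟨j, hj⟩ := Function.ne_iff.mp hv
  exact (Finset.sum_pos_iff_of_nonneg fun j _ => sq_nonneg (v j)).mpr
    ⟨j, mem_univ j, sq_pos_of_ne_zero hj⟩

lemma bddAbove_specNorm_set {n m : ℕ} (A : Matrix (Fin n) (Fin m) ℝ) :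
    BddAbove {r : ℝ | ∃ x : Fin m → ℝ, ∑ j, x j ^ 2 = 1 ∧
      r = Real.sqrt (∑ i, (A.mulVec x) i ^ 2)} := by
  refine ⟨√(∑ i, ∑ j, A i j ^ 2), ?_⟩
  rintro r ⟨x, hx, rfl⟩
  refine Real.sqrt_le_sqrt (Finset.sum_le_sum fun i _ => ?_)
  calc (A *ᵥ x) i ^ 2 = (∑ j, A i j * x j) ^ 2 := rfl
    _ ≤ (∑ j, A i j ^ 2) * ∑ j, x j ^ 2 :=
        Finset.sum_mul_sq_le_sq_mul_sq _ _ _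
    _ = ∑ j, A i j ^ 2 := by rw [hx, mul_one]

lemma specNorm_nonneg {n m : ℕ} (A : Matrix (Fin n) (Fin m) ℝ) : 0 ≤ specNorm A :=
  Real.sSup_nonneg fun _ ⟨_, _, hr⟩ => hr ▸ Real.sqrt_nonneg _

lemma sqrt_sum_mulVec_sq_le_specNorm {n m : ℕ} (A : Matrix (Fin n) (Fin m) ℝ)
    {x : Fin m → ℝ} (hx : ∑ j, x j ^ 2 = 1) : √(∑ i, (A *ᵥ x) i ^ 2) ≤ specNorm A :=
  le_csSup (bddAbove_specNorm_set A) ⟨x, hx, rfl⟩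

lemma dotProduct_mulVec_le_mul_specNorm {n m : ℕ} (u : Fin n → ℝ) (v : Fin m → ℝ)
    (A : Matrix (Fin n) (Fin m) ℝ) :
    u ⬝ᵥ (A *ᵥ v) ≤ √(∑ i, u i ^ 2) * √(∑ j, v j ^ 2) * specNorm A := by
  by_cases hv : v = 0
  · simp [hv]
  have hv2 := sum_sq_pos_of_ne_zero hv
  set c := √(∑ j, v j ^ 2)
  have hc : 0 < c := Real.sqrt_pos.mpr hv2
  have hx : ∑ j, (c⁻¹ • v) j ^ 2 = 1 := by
    simp only [Pi.smul_apply, smul_eq_mul, mul_pow, ← Finset.mul_sum, inv_pow,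
      Real.sq_sqrt hv2.le, c]
    exact inv_mul_cancel₀ hv2.ne'
  calc u ⬝ᵥ (A *ᵥ v) = c * (u ⬝ᵥ (A *ᵥ (c⁻¹ • v))) := by
        rw [mulVec_smul, dotProduct_smul, smul_eq_mul, mul_inv_cancel_left₀ hc.ne']
    _ ≤ c * (√(∑ i, u i ^ 2) * √(∑ i, (A *ᵥ (c⁻¹ • v)) i ^ 2)) :=
        mul_le_mul_of_nonneg_left (Real.sum_mul_le_sqrt_mul_sqrt _ _ _) hc.le
    _ ≤ c * (√(∑ i, u i ^ 2) * specNorm A) := by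
        gcongr
        exact sqrt_sum_mulVec_sq_le_specNorm A hx
    _ = √(∑ i, u i ^ 2) * c * specNorm A := by ring

lemma exists_eq_vecMulVec_of_rank_eq_one {n m : ℕ} {g : Matrix (Fin n) (Fin m) ℝ}
    (hg : g.rank = 1) : ∃ (u : Fin n → ℝ) (v : Fin m → ℝ), g = vecMulVec u v := by
  obtain ⟨u, -, hspan⟩ := finrank_eq_one_iff'.mp hg
  have hcol : ∀ j, ∃ c : ℝ, c • (u : Fin n → ℝ) = g.col j := fun j => by
    obtain ⟨c, hc⟩ := hspan ⟨g *ᵥ Pi.single j 1, Pi.single j 1, rfl⟩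
    exact ⟨c, by simpa [mulVec_single] using congrArg Subtype.val hc⟩
  choose v hv using hcol
  refine ⟨u, v, Matrix.ext fun i j => ?_⟩
  rw [vecMulVec_apply, mul_comm, ← smul_eq_mul, ← Pi.smul_apply, hv j, col_apply]

lemma frobInner_le_frobNorm_mul_specNorm_of_rank_eq_one {n m : ℕ}
    {g : Matrix (Fin n) (Fin m) ℝ} (hg : g.rank = 1) (A : Matrix (Fin n) (Fin m) ℝ) :
    frobInner g A ≤ frobNorm g * specNorm A := by
  obtain ⟨u, v, rfl⟩ := exists_eq_vecMulVec_of_rank_eq_one hg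
  rw [frobInner_vecMulVec, frobNorm_vecMulVec]
  exact dotProduct_mulVec_le_mul_specNorm u v A

/-- If `g` is rank one and `b ⟂ g` in the Frobenius inner product, then for every `a ≥ 0`,
the largest singular value of `a g + b` is at least `a ‖g‖_F`. -/
theorem specNorm_rankOne_add_orth_ge
    {n m : ℕ} (g b : Matrix (Fin n) (Fin m) ℝ)
    (hg : g.rank = 1) (horth : frobInner g b = 0) :
    ∀ a : ℝ, 0 ≤ a → a * frobNorm g ≤ specNorm (a • g + b) := by
  intro a _
  have key : frobNorm g * (a * frobNorm g) ≤ frobNorm g * specNorm (a • g + b) := by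
    have h := frobInner_le_frobNorm_mul_specNorm_of_rank_eq_one hg (a • g + b)
    rwa [frobInner_add_smul_right, horth, add_zero, ← frobNorm_sq, sq, mul_left_comm] at h
  rcases (frobNorm_nonneg g).eq_or_lt with h | h
  · rw [← h, mul_zero]
    exact specNorm_nonneg _
  · exact le_of_mul_le_mul_left key h
end

section
/- Let f : ℝ^{m×n} → ℝ (m ≤ n) be differentiable with L-Lipschitz gradient (with respect to the Frobenius norm). Fix W^(t), M^(t) ∈ ℝ^{m×n}, let M^(t) = U S Vᵀ be an SVD with semi-orthogonal polar factor UVᵀ (so (UVᵀ)(UVᵀ)ᵀ = I_m and ‖UVᵀ‖_F = √m), let O^(t) = UVᵀ + E with ‖E‖_F ≤ δ√m for some δ ≥ 0, and let W^(t+1) = W^(t) − η_t O^(t) with η_t > 0. Assume in addition the alignment inequality −⟨∇f(W^(t)), UVᵀ⟩_F ≤ −¼‖∇f(W^(t))‖_F + (5/2)‖∇f(W^(t)) − M^(t)‖_F. Then f(W^(t+1)) ≤ f(W^(t)) − (η_t/4 − η_t√m·δ)‖∇f(W^(t))‖_F + (5η_t/2)‖∇f(W^(t)) − M^(t)‖_F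 + η_t²mL/2 + η_t²mLδ + η_t²Lmδ²/2. -/
/-!
Equip matrices with the Frobenius inner product, whose norm is `frobNorm`. In a real inner product
space, a function with `L`-Lipschitz gradient satisfies the descent lemma
`f (x + v) ≤ f x + ⟪∇f x, v⟫ + L/2 ‖v‖²`, obtained by comparing `s ↦ f (x + s • v)` on `[0, 1]` with
its quadratic upper model. Take `v = -η (P + E)`: the `P`-term is controlled by the alignment
inequality, the `E`-term by Cauchy–Schwarz, and `‖P + E‖ ≤ ‖P‖ + ‖E‖ ≤ √m (1 + δ)` because
`‖P‖² = tr (P Pᵀ) = m`.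
-/

open Matrix Finset

open scoped RealInnerProductSpace

section LineDerivative

variable {E : Type*} [AddCommGroup E] [Module ℝ E] {f : E → ℝ} {f' : E → E → ℝ}

theorem hasDerivAt_apply_add_smul
    (hf : ∀ x v, HasDerivAt (fun s : ℝ => f (x + s • v)) (f' x v) 0) (x v : E) (t : ℝ) :
    HasDerivAt (fun s : ℝ => f (x + s • v)) (f' (x + t • v) v) t := by
  have hshift : HasDerivAt (fun s : ℝ => f (x + t • v + (s - t) • v)) (f' (x + t • v) v) t :=
    HasDerivAt.comp_sub_const t t (by simpa using hf (x + t • v) v)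
  convert hshift using 3 with s
  rw [sub_smul, add_add_sub_cancel]

end LineDerivative

section Descent

variable {E : Type*} [NormedAddCommGroup E] [InnerProductSpace ℝ E] {f : E → ℝ} {g : E → E}
  {L : ℝ}

theorem apply_add_le_of_lipschitz_grad
    (hf : ∀ x v, HasDerivAt (fun s : ℝ => f (x + s • v)) ⟪g x, v⟫ 0)
    (hg : ∀ x y, ‖g x - g y‖ ≤ L * ‖x - y‖) (x v : E) :
    f (x + v) ≤ f x + ⟪g x, v⟫ + L / 2 * ‖v‖ ^ 2 := by
  have hB : ∀ s : ℝ, HasDerivAt (fun s => f x + s * ⟪g x, v⟫ + L / 2 * ‖v‖ ^ 2 * s ^ 2)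
      (⟪g x, v⟫ + L * ‖v‖ ^ 2 * s) s := fun s =>
    ((((hasDerivAt_id s).mul_const _).const_add _).add
      ((hasDerivAt_pow 2 s).const_mul _)).congr_deriv (by ring)
  have hslope :
      ∀ s ∈ Set.Ico (0 : ℝ) 1, ⟪g (x + s • v), v⟫ ≤ ⟪g x, v⟫ + L * ‖v‖ ^ 2 * s := by
    rintro s ⟨hs, -⟩
    have hlip : ‖g (x + s • v) - g x‖ ≤ L * (s * ‖v‖) := by
      simpa [norm_smul, abs_of_nonneg hs] using hg (x + s • v) x
    calc ⟪g (x + s • v), v⟫ = ⟪g x, v⟫ + ⟪g (x + s • v) - g x, v⟫ := by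
          rw [inner_sub_left]; ring
      _ ≤ ⟪g x, v⟫ + ‖g (x + s • v) - g x‖ * ‖v‖ := by gcongr; exact real_inner_le_norm _ _
      _ ≤ ⟪g x, v⟫ + L * (s * ‖v‖) * ‖v‖ := by gcongr
      _ = ⟪g x, v⟫ + L * ‖v‖ ^ 2 * s := by ring
  have hline := hasDerivAt_apply_add_smul hf x v
  have key := image_le_of_deriv_right_le_deriv_boundary
    (fun s _ => (hline s).continuousAt.continuousWithinAt)
    (fun s _ => (hline s).hasDerivWithinAt) (by simp)
    (fun s _ => (hB s).continuousAt.continuousWithinAt) (fun s _ => (hB s).hasDerivWithinAt)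
    hslope (Set.right_mem_Icc.2 zero_le_one)
  simpa using key

theorem apply_sub_smul_add_le_of_lipschitz_grad
    (hf : ∀ x v, HasDerivAt (fun s : ℝ => f (x + s • v)) ⟪g x, v⟫ 0)
    (hg : ∀ x y, ‖g x - g y‖ ≤ L * ‖x - y‖) (hL : 0 ≤ L) {η : ℝ} (hη : 0 ≤ η) (x p e : E) :
    f (x - η • (p + e)) ≤
      f x - η * ⟪g x, p⟫ + η * ‖g x‖ * ‖e‖ + L / 2 * η ^ 2 * (‖p‖ + ‖e‖) ^ 2 := by
  have hdescent := apply_add_le_of_lipschitz_grad hf hg x (-(η • (p + e)))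
  have hinner : -⟪g x, e⟫ ≤ ‖g x‖ * ‖e‖ := by
    simpa using real_inner_le_norm (g x) (-e)
  have hnorm : ‖-(η • (p + e))‖ ≤ η * (‖p‖ + ‖e‖) := by
    rw [norm_neg, norm_smul, Real.norm_of_nonneg hη]
    gcongr
    exact norm_add_le p e
  calc f (x - η • (p + e))
        ≤ f x + ⟪g x, -(η • (p + e))⟫ + L / 2 * ‖-(η • (p + e))‖ ^ 2 := by
          simpa [sub_eq_add_neg] using hdescent
    _ ≤ f x + (-η * ⟪g x, p⟫ + η * (‖g x‖ * ‖e‖)) + L / 2 * (η * (‖p‖ + ‖e‖)) ^ 2 := by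
          gcongr
          rw [inner_neg_right, inner_smul_right, inner_add_right]
          linarith [mul_le_mul_of_nonneg_left hinner hη]
    _ = _ := by ring

end Descent

section Frobenius

variable {m n : ℕ}

theorem frobInner_comm (A B : Matrix (Fin m) (Fin n) ℝ) : frobInner A B = frobInner B A := by
  rw [frobInner, ← trace_transpose, transpose_mul, transpose_transpose, frobInner]

/-- Not an instance, like `Matrix.frobeniusNormedAddCommGroup`: matrices carry no global norm.
The norm of the resulting structure is `frobNorm` by definition. -/
noncomputable abbrev frobInnerProductCore :
    InnerProductSpace.Core ℝ (Matrix (Fin m) (Fin n) ℝ) where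
  inner := frobInner
  conj_inner_symm A B := frobInner_comm B A
  re_inner_nonneg A := by
    simpa [frobInner, conjTranspose_eq_transpose_of_trivial] using
      (posSemidef_conjTranspose_mul_self A).trace_nonneg
  add_left A B C := by rw [frobInner, transpose_add, Matrix.add_mul, trace_add]; rfl
  smul_left A B r := by simp [frobInner]
  definite A h := by
    rwa [frobInner, ← conjTranspose_eq_transpose_of_trivial,
      trace_conjTranspose_mul_self_eq_zero_iff] at h

noncomputable abbrev frobInnerNormedAddCommGroup :
    NormedAddCommGroup (Matrix (Fin m) (Fin n) ℝ) :=
  frobInnerProductCore.toNormedAddCommGroup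

noncomputable abbrev frobInnerProductSpace :
    @InnerProductSpace ℝ (Matrix (Fin m) (Fin n) ℝ) _
      frobInnerNormedAddCommGroup.toSeminormedAddCommGroup :=
  InnerProductSpace.ofCore frobInnerProductCore.toCore

theorem frobNorm_eq_sqrt_of_mul_transpose_eq_one {P : Matrix (Fin m) (Fin n) ℝ}
    (hP : P * Pᵀ = 1) : frobNorm P = √m := by
  rw [frobNorm, frobInner, trace_mul_comm, hP, trace_one, Fintype.card_fin]

end Frobenius

theorem descent_lemma_newton_schulz_error_general
    {m n : ℕ}
    (f : Matrix (Fin m) (Fin n) ℝ → ℝ)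
    (gradf : Matrix (Fin m) (Fin n) ℝ → Matrix (Fin m) (Fin n) ℝ)
    (hgrad : ∀ W V : Matrix (Fin m) (Fin n) ℝ,
      HasDerivAt (fun s : ℝ => f (W + s • V)) (frobInner (gradf W) V) 0)
    (L : ℝ) (hL : 0 ≤ L)
    (hlip : ∀ X Y : Matrix (Fin m) (Fin n) ℝ,
      frobNorm (gradf X - gradf Y) ≤ L * frobNorm (X - Y))
    (Wt Mt P E O W' : Matrix (Fin m) (Fin n) ℝ)
    (hP : P * Pᵀ = 1)
    (δ : ℝ)
    (hO : O = P + E)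
    (hE : frobNorm E ≤ δ * Real.sqrt m)
    (η : ℝ) (hη : 0 < η)
    (hW' : W' = Wt - η • O)
    (halign : -(frobInner (gradf Wt) P) ≤
      -(1 / 4) * frobNorm (gradf Wt) + (5 / 2) * frobNorm (gradf Wt - Mt)) :
    f W' ≤ f Wt - (η / 4 - η * Real.sqrt m * δ) * frobNorm (gradf Wt)
      + (5 * η / 2) * frobNorm (gradf Wt - Mt)
      + η ^ 2 * m * L / 2 + η ^ 2 * m * L * δ + η ^ 2 * L * m * δ ^ 2 / 2 := by
  let := frobInnerNormedAddCommGroup (m := m) (n := n)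
  let := frobInnerProductSpace (m := m) (n := n)
  have hstep : f W' ≤ f Wt - η * frobInner (gradf Wt) P
      + η * frobNorm (gradf Wt) * frobNorm E + L / 2 * η ^ 2 * (frobNorm P + frobNorm E) ^ 2 := by
    rw [hW', hO]
    exact apply_sub_smul_add_le_of_lipschitz_grad (f := f) (g := gradf) hgrad hlip hL hη.le
      Wt P E
  have hPnorm := frobNorm_eq_sqrt_of_mul_transpose_eq_one hP
  have hsum : frobNorm P + frobNorm E ≤ √m * (1 + δ) := by rw [hPnorm]; linarith
  have hsq : (frobNorm P + frobNorm E) ^ 2 ≤ m * (1 + δ) ^ 2 :=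
    calc (frobNorm P + frobNorm E) ^ 2 ≤ (√m * (1 + δ)) ^ 2 :=
          pow_le_pow_left₀ (add_nonneg (norm_nonneg P) (norm_nonneg E)) hsum 2
      _ = m * (1 + δ) ^ 2 := by rw [mul_pow, Real.sq_sqrt m.cast_nonneg]
  have hG : 0 ≤ η * frobNorm (gradf Wt) := mul_nonneg hη.le (norm_nonneg (gradf Wt))
  linarith [mul_le_mul_of_nonneg_left halign hη.le, mul_le_mul_of_nonneg_left hE hG,
    mul_le_mul_of_nonneg_left hsq (by positivity : 0 ≤ L / 2 * η ^ 2)]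

/-- **Descent lemma with Newton–Schulz approximation error.**
`f` is differentiable with gradient `gradf` (encoded via directional derivatives w.r.t. the
Frobenius inner product) which is `L`-Lipschitz in the Frobenius norm.  With semi-orthogonal
polar factor `P = UVᵀ` (`PPᵀ = I`), inexact orthogonalization `O = P + E`, `‖E‖_F ≤ δ√m`,
update `W' = W − ηO`, and the alignment inequality
`−⟨∇f(W), P⟩ ≤ −¼‖∇f(W)‖ + (5/2)‖∇f(W) − M‖`, one gets the stated one-step descent bound. -/
theorem descent_lemma_newton_schulz_error
    {m n : ℕ} (hmn : m ≤ n)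
    (f : Matrix (Fin m) (Fin n) ℝ → ℝ)
    (gradf : Matrix (Fin m) (Fin n) ℝ → Matrix (Fin m) (Fin n) ℝ)
    (hgrad : ∀ W V : Matrix (Fin m) (Fin n) ℝ,
      HasDerivAt (fun s : ℝ => f (W + s • V)) (frobInner (gradf W) V) 0)
    (L : ℝ) (hL : 0 ≤ L)
    (hlip : ∀ X Y : Matrix (Fin m) (Fin n) ℝ,
      frobNorm (gradf X - gradf Y) ≤ L * frobNorm (X - Y))
    (Wt Mt P E O W' : Matrix (Fin m) (Fin n) ℝ)
    (hP : P * Pᵀ = 1)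
    (δ : ℝ) (hδ : 0 ≤ δ)
    (hO : O = P + E)
    (hE : frobNorm E ≤ δ * Real.sqrt m)
    (η : ℝ) (hη : 0 < η)
    (hW' : W' = Wt - η • O)
    (halign : -(frobInner (gradf Wt) P) ≤
      -(1 / 4) * frobNorm (gradf Wt) + (5 / 2) * frobNorm (gradf Wt - Mt)) :
    f W' ≤ f Wt - (η / 4 - η * Real.sqrt m * δ) * frobNorm (gradf Wt)
      + (5 * η / 2) * frobNorm (gradf Wt - Mt)
      + η ^ 2 * m * L / 2 + η ^ 2 * m * L * δ + η ^ 2 * L * m * δ ^ 2 / 2 :=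
  descent_lemma_newton_schulz_error_general f gradf hgrad L hL hlip Wt Mt P E O W' hP δ hO hE η hη
    hW' halign
end

section
/- Let f : ℝ^{m×n} → ℝ be differentiable with β-Lipschitz gradient (β-smooth). Fix a matrix Q ∈ ℝ^{m×r} with orthonormal columns (QᵀQ = I_r), and at step t let Ĝ^(t) = Qᵀ∇f(W^(t)) ∈ ℝ^{r×n} be the projected gradient, let M^(t) ∈ ℝ^{r×n}, and let O^(t) ∈ ℝ^{r×n} satisfy ‖O^(t)‖_F² ≤ n. Update W^(t+1) = W^(t) − η_t Q O^(t) with η_t > 0. Assume (i) the alignment inequality −⟨Ĝ^(t), O^(t)⟩_F ≤ −¼‖Ĝ^(t)‖_F² + (5/2)‖Ĝ^(t) − M^(t)‖_F, and (ii) ‖Ĝ^(t) − M^(t)‖_F ≤ σ/√m. Then f(W^(t+1)) ≤ f(W^(t)) − (η_t/4)‖Ĝ^(t)‖_F² + (5/2)·(η_t σ/√m) + βη_t²n/2. -/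
open Matrix Finset

/-!
The β-smoothness of `f` gives the descent lemma
`f (W + V) ≤ f W + ⟨∇f W, V⟩ + β/2 ‖V‖²` (mean value theorem for `s ↦ f (W + s V)` minus its
quadratic model). For `V = -η Q O`, the orthonormal columns of `Q` turn `⟨∇f W, Q O⟩` into
`⟨Ĝ, O⟩` and `‖Q O‖` into `‖O‖`; the alignment inequality, the noise bound and `‖O‖² ≤ n`
then bound the three terms.
-/

theorem hasDerivAt_line_of_hasDerivAt_zero {E : Type*} [AddCommGroup E] [Module ℝ E]
    {f : E → ℝ} {D : E → E → ℝ}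
    (hf : ∀ W V : E, HasDerivAt (fun s : ℝ => f (W + s • V)) (D W V) 0) (W V : E) (s : ℝ) :
    HasDerivAt (fun t : ℝ => f (W + t • V)) (D (W + s • V) V) s := by
  have h := HasDerivAt.comp_sub_const s s ((sub_self s).symm ▸ hf (W + s • V) V)
  have hline : ∀ t : ℝ, W + s • V + (t - s) • V = W + t • V := fun t => by
    rw [add_assoc, ← add_smul, add_sub_cancel]
  simpa only [hline] using h

theorem le_add_deriv_add_half_of_deriv_sub_le {g g' : ℝ → ℝ} {L : ℝ}
    (hg : ∀ s, HasDerivAt g (g' s) s) (hg' : ∀ s ∈ Set.Ioo (0 : ℝ) 1, g' s - g' 0 ≤ L * s) :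
    g 1 ≤ g 0 + g' 0 + L / 2 := by
  set h : ℝ → ℝ := fun s => g s - s * g' 0 - L / 2 * s ^ 2
  have hh : ∀ s, HasDerivAt h (g' s - g' 0 - L * s) s := fun s =>
    (((hg s).sub ((hasDerivAt_id' s).mul_const (g' 0))).sub
      ((hasDerivAt_pow 2 s).const_mul (L / 2))).congr_deriv (by ring)
  obtain ⟨c, hc, hslope⟩ := exists_hasDerivAt_eq_slope h _ zero_lt_one
    (fun s _ => (hh s).continuousAt.continuousWithinAt) (fun s _ => hh s)
  have hdecrease : h 1 - h 0 ≤ 0 := by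
    simpa [hslope] using sub_nonpos.2 (hg' c hc)
  simp only [h] at hdecrease
  linarith

section Frobenius

variable {k l p : ℕ}

theorem frobInner_eq_sum (A B : Matrix (Fin k) (Fin l) ℝ) :
    frobInner A B = ∑ q : Fin k × Fin l, A q.1 q.2 * B q.1 q.2 := by
  rw [frobInner, Matrix.trace, Fintype.sum_prod_type, Finset.sum_comm]
  rfl

theorem frobInner_le_frobNorm_mul_frobNorm (A B : Matrix (Fin k) (Fin l) ℝ) :
    frobInner A B ≤ frobNorm A * frobNorm B := by
  simp only [frobNorm, frobInner_eq_sum, ← sq]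
  exact Real.sum_mul_le_sqrt_mul_sqrt _ _ _

theorem frobInner_smul_left (s : ℝ) (A B : Matrix (Fin k) (Fin l) ℝ) :
    frobInner (s • A) B = s * frobInner A B := by
  simp [frobInner, Matrix.transpose_smul, Matrix.smul_mul, Matrix.trace_smul]

theorem frobInner_smul_right (s : ℝ) (A B : Matrix (Fin k) (Fin l) ℝ) :
    frobInner A (s • B) = s * frobInner A B := by
  simp [frobInner, Matrix.mul_smul, Matrix.trace_smul]

theorem frobInner_sub_left (A B C : Matrix (Fin k) (Fin l) ℝ) :
    frobInner (A - B) C = frobInner A C - frobInner B C := by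
  simp [frobInner, Matrix.transpose_sub, Matrix.sub_mul, Matrix.trace_sub]

theorem frobNorm_smul (s : ℝ) (A : Matrix (Fin k) (Fin l) ℝ) :
    frobNorm (s • A) = |s| * frobNorm A := by
  rw [frobNorm, frobInner_smul_left, frobInner_smul_right, ← mul_assoc, ← sq,
    Real.sqrt_mul (sq_nonneg s), Real.sqrt_sq_eq_abs, frobNorm]

theorem frobInner_mul_right (G : Matrix (Fin k) (Fin l) ℝ) (Q : Matrix (Fin k) (Fin p) ℝ)
    (O : Matrix (Fin p) (Fin l) ℝ) :
    frobInner G (Q * O) = frobInner (Qᵀ * G) O := by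
  rw [frobInner, frobInner, Matrix.transpose_mul, Matrix.transpose_transpose, Matrix.mul_assoc]

theorem frobNorm_mul_of_transpose_mul_self_eq_one {Q : Matrix (Fin k) (Fin p) ℝ}
    (hQ : Qᵀ * Q = 1) (O : Matrix (Fin p) (Fin l) ℝ) :
    frobNorm (Q * O) = frobNorm O := by
  rw [frobNorm, frobInner_mul_right, ← Matrix.mul_assoc, hQ, Matrix.one_mul, frobNorm]

end Frobenius

theorem le_add_frobInner_add_half_of_lipschitz_grad {m n : ℕ}
    {f : Matrix (Fin m) (Fin n) ℝ → ℝ}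
    {gradf : Matrix (Fin m) (Fin n) ℝ → Matrix (Fin m) (Fin n) ℝ}
    (hgrad : ∀ W V : Matrix (Fin m) (Fin n) ℝ,
      HasDerivAt (fun s : ℝ => f (W + s • V)) (frobInner (gradf W) V) 0)
    {β : ℝ} (hsmooth : ∀ X Y : Matrix (Fin m) (Fin n) ℝ,
      frobNorm (gradf X - gradf Y) ≤ β * frobNorm (X - Y))
    (W V : Matrix (Fin m) (Fin n) ℝ) :
    f (W + V) ≤ f W + frobInner (gradf W) V + β / 2 * frobNorm V ^ 2 := by
  have hmodel := le_add_deriv_add_half_of_deriv_sub_le (L := β * frobNorm V ^ 2)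
    (hasDerivAt_line_of_hasDerivAt_zero hgrad W V) fun s hs => by
      calc frobInner (gradf (W + s • V)) V - frobInner (gradf (W + (0 : ℝ) • V)) V
          = frobInner (gradf (W + s • V) - gradf W) V := by
            rw [zero_smul, add_zero, frobInner_sub_left]
        _ ≤ frobNorm (gradf (W + s • V) - gradf W) * frobNorm V :=
            frobInner_le_frobNorm_mul_frobNorm _ _
        _ ≤ β * frobNorm (s • V) * frobNorm V := by
            gcongr
            · exact Real.sqrt_nonneg _
            · simpa using hsmooth (W + s • V) W
        _ = β * frobNorm V ^ 2 * s := by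
            rw [frobNorm_smul, abs_of_pos hs.1]
            ring
  simpa [mul_div_right_comm] using hmodel

theorem sumo_inner_descent_step_general
    {m n r : ℕ}
    (f : Matrix (Fin m) (Fin n) ℝ → ℝ)
    (gradf : Matrix (Fin m) (Fin n) ℝ → Matrix (Fin m) (Fin n) ℝ)
    (hgrad : ∀ W V : Matrix (Fin m) (Fin n) ℝ,
      HasDerivAt (fun s : ℝ => f (W + s • V)) (frobInner (gradf W) V) 0)
    (β : ℝ) (hβ : 0 ≤ β)
    (hsmooth : ∀ X Y : Matrix (Fin m) (Fin n) ℝ,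
      frobNorm (gradf X - gradf Y) ≤ β * frobNorm (X - Y))
    (Q : Matrix (Fin m) (Fin r) ℝ) (hQ : Qᵀ * Q = 1)
    (Wt W' : Matrix (Fin m) (Fin n) ℝ)
    (Ghat Mt Ot : Matrix (Fin r) (Fin n) ℝ)
    (hGhat : Ghat = Qᵀ * gradf Wt)
    (hO : frobNorm Ot ^ 2 ≤ n)
    (η σ : ℝ) (hη : 0 < η)
    (hW' : W' = Wt - η • (Q * Ot))
    (halign : -(frobInner Ghat Ot) ≤
      -(1 / 4) * frobNorm Ghat ^ 2 + (5 / 2) * frobNorm (Ghat - Mt))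
    (hnoise : frobNorm (Ghat - Mt) ≤ σ / Real.sqrt m) :
    f W' ≤ f Wt - (η / 4) * frobNorm Ghat ^ 2
      + (5 / 2) * (η * σ / Real.sqrt m) + β * η ^ 2 * n / 2 := by
  have hstep := le_add_frobInner_add_half_of_lipschitz_grad hgrad hsmooth Wt (-η • (Q * Ot))
  rw [frobInner_smul_right, frobInner_mul_right, ← hGhat, frobNorm_smul,
    frobNorm_mul_of_transpose_mul_self_eq_one hQ, abs_neg, abs_of_pos hη, neg_smul,
    ← sub_eq_add_neg, ← hW'] at hstep
  calc f W' ≤ f Wt + η * -frobInner Ghat Ot + β / 2 * η ^ 2 * frobNorm Ot ^ 2 := by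
        linarith
    _ ≤ f Wt + η * (-(1 / 4) * frobNorm Ghat ^ 2 + 5 / 2 * (σ / Real.sqrt m))
        + β / 2 * η ^ 2 * n := by
        gcongr
        exact halign.trans (by gcongr)
    _ = f Wt - (η / 4) * frobNorm Ghat ^ 2
        + (5 / 2) * (η * σ / Real.sqrt m) + β * η ^ 2 * n / 2 := by
        ring

/-- **One-step descent of SUMO's inner fixed low-rank optimization.**
`f` is β-smooth with gradient `gradf`; `Q` has orthonormal columns; `Ĝ = Qᵀ∇f(W)` is the
projected gradient, `O` the orthogonalized low-rank momentum with `‖O‖_F² ≤ n`; with the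
alignment inequality and `‖Ĝ − M‖_F ≤ σ/√m`, the update `W' = W − ηQO` satisfies
`f(W') ≤ f(W) − (η/4)‖Ĝ‖² + (5/2)(ησ/√m) + βη²n/2`. -/
theorem sumo_inner_descent_step
    {m n r : ℕ}
    (f : Matrix (Fin m) (Fin n) ℝ → ℝ)
    (gradf : Matrix (Fin m) (Fin n) ℝ → Matrix (Fin m) (Fin n) ℝ)
    (hgrad : ∀ W V : Matrix (Fin m) (Fin n) ℝ,
      HasDerivAt (fun s : ℝ => f (W + s • V)) (frobInner (gradf W) V) 0)
    (β : ℝ) (hβ : 0 ≤ β)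
    (hsmooth : ∀ X Y : Matrix (Fin m) (Fin n) ℝ,
      frobNorm (gradf X - gradf Y) ≤ β * frobNorm (X - Y))
    (Q : Matrix (Fin m) (Fin r) ℝ) (hQ : Qᵀ * Q = 1)
    (Wt W' : Matrix (Fin m) (Fin n) ℝ)
    (Ghat Mt Ot : Matrix (Fin r) (Fin n) ℝ)
    (hGhat : Ghat = Qᵀ * gradf Wt)
    (hO : frobNorm Ot ^ 2 ≤ n)
    (η σ : ℝ) (hη : 0 < η) (hσ : 0 ≤ σ)
    (hW' : W' = Wt - η • (Q * Ot))
    (halign : -(frobInner Ghat Ot) ≤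
      -(1 / 4) * frobNorm Ghat ^ 2 + (5 / 2) * frobNorm (Ghat - Mt))
    (hnoise : frobNorm (Ghat - Mt) ≤ σ / Real.sqrt m) :
    f W' ≤ f Wt - (η / 4) * frobNorm Ghat ^ 2
      + (5 / 2) * (η * σ / Real.sqrt m) + β * η ^ 2 * n / 2 :=
  sumo_inner_descent_step_general f gradf hgrad β hβ hsmooth Q hQ Wt W' Ghat Mt Ot hGhat hO η σ hη
    hW' halign hnoise
end
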